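/- arXiv:math/0508557 — 2 statements merged into one kernel-verified Lean document; each statement's English description precedes it below -/
import Mathlib

section
/- For every n ≥ 1 and every matrix A ∈ M_n(ℂ), the centralizer {B ∈ M_n(ℂ) : AB = BA}, viewed as a ℂ-linear subspace of M_n(ℂ), has dimension at least n. -/
/-!
Let `K[X]` act on the finite-dimensional space `V` through the endomorphism `f`. By the
structure theorem over the PID `K[X]`, `V` is isomorphic to a product of cyclic modules
`K[X] ⧸ (q)`, which is a commutative `K[X]`-algebra `S`. Multiplication by elements of `S`
therefore embeds `V` into `End_{K[X]} V`, and the `K[X]`-linear endomorphisms of `V` are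
precisely the `K`-linear maps commuting with `f`.
-/

open Matrix

noncomputable def matCentralizer (n : ℕ) (A : Matrix (Fin n) (Fin n) ℂ) :
    Submodule ℂ (Matrix (Fin n) (Fin n) ℂ) where
  carrier := {B | A * B = B * A}
  add_mem' := by
    intro B C hB hC
    simp only [Set.mem_setOf_eq] at *
    rw [mul_add, add_mul, hB, hC]
  zero_mem' := by simp
  smul_mem' := by
    intro c B hB
    simp only [Set.mem_setOf_eq] at *
    rw [mul_smul_comm, smul_mul_assoc, hB]

open Polynomial Module

namespace Module

theorem exists_injective_end_of_linearEquiv {R S M : Type*} [CommSemiring R] [Semiring S]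
    [Algebra R S] [AddCommMonoid M] [Module R M] (e : M ≃ₗ[R] S) :
    ∃ ψ : M →ₗ[R] Module.End R M, Function.Injective ψ := by
  refine ⟨e.symm.conj.toLinearMap ∘ₗ LinearMap.mul R S ∘ₗ e.toLinearMap, fun x y h => ?_⟩
  simpa [LinearEquiv.conj_apply] using LinearMap.congr_fun h (e.symm 1)

theorem exists_injective_end_of_isPrincipalIdealRing {R M : Type*} [CommRing R] [IsDomain R]
    [IsPrincipalIdealRing R] [AddCommGroup M] [Module R M] [Module.Finite R M] :
    ∃ ψ : M →ₗ[R] Module.End R M, Function.Injective ψ := by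
  obtain ⟨n, ι, _, _, -, _, ⟨φ⟩⟩ := Module.equiv_free_prod_directSum R M
  exact exists_injective_end_of_linearEquiv <| φ.trans <|
    (Finsupp.linearEquivFunOnFinite R R (Fin n)).prodCongr (DirectSum.linearEquivFunOnFintype R ι _)

theorem AEval'.commute_conj_restrictScalars {R M : Type*} [CommSemiring R] [AddCommMonoid M]
    [Module R M] {f : Module.End R M} (g : Module.End R[X] (AEval' f)) :
    Commute f ((AEval'.of f).symm.conj (g.restrictScalars R)) := by
  ext m
  simp [LinearEquiv.conj_apply, ← AEval'.X_smul_of]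

theorem End.finrank_le_finrank_centralizer {K V : Type*} [Field K] [AddCommGroup V]
    [Module K V] [FiniteDimensional K V] (f : Module.End K V) :
    finrank K V ≤ finrank K (Subalgebra.centralizer K {f}) := by
  obtain ⟨ψ, hψ⟩ := exists_injective_end_of_isPrincipalIdealRing (R := K[X]) (M := AEval' f)
  let ρ : Module.End K[X] (AEval' f) →ₗ[K]
      Subalgebra.toSubmodule (Subalgebra.centralizer K {f}) :=
    LinearMap.codRestrict _
      ((AEval'.of f).symm.conj.toLinearMap ∘ₗ LinearMap.restrictScalarsₗ K K[X] _ _ K)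
      fun g => by
        simpa [Subalgebra.mem_centralizer_iff] using (AEval'.commute_conj_restrictScalars g).eq
  have hρ : Function.Injective ρ := fun g h hgh =>
    LinearMap.restrictScalars_injective K ((AEval'.of f).symm.conj.injective congr($hgh.1))
  rw [← Subalgebra.finrank_toSubmodule]
  exact LinearMap.finrank_le_finrank_of_injective
    (f := ρ ∘ₗ ψ.restrictScalars K ∘ₗ (AEval'.of f).toLinearMap)
    (hρ.comp (hψ.comp (AEval'.of f).injective))

end Module

theorem Matrix.card_le_finrank_centralizer {K ι : Type*} [Field K] [Fintype ι] [DecidableEq ι]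
    (A : Matrix ι ι K) : Fintype.card ι ≤ finrank K (Subalgebra.centralizer K {A}) := by
  have h : Subalgebra.toSubmodule (Subalgebra.centralizer K {A}) =
      (Subalgebra.toSubmodule (Subalgebra.centralizer K {toLin' A})).map
        (LinearMap.toMatrix' : Module.End K (ι → K) ≃ₗ[K] _).toLinearMap := by
    ext B
    rw [Submodule.mem_map_equiv]
    simp only [Subalgebra.mem_toSubmodule, Subalgebra.mem_centralizer_iff, Set.mem_singleton_iff,
      forall_eq, LinearMap.toMatrix'_symm]
    change _ ↔ toLinAlgEquiv' A * toLinAlgEquiv' B = toLinAlgEquiv' B * toLinAlgEquiv' A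
    rw [← map_mul, ← map_mul, toLinAlgEquiv'.injective.eq_iff]
  rw [← Subalgebra.finrank_toSubmodule, h, LinearEquiv.finrank_map_eq,
    Subalgebra.finrank_toSubmodule]
  simpa using Module.End.finrank_le_finrank_centralizer (toLin' A)

theorem centralizer_dim_ge_general (n : ℕ) (A : Matrix (Fin n) (Fin n) ℂ) :
    n ≤ Module.finrank ℂ (matCentralizer n A) := by
  have h : matCentralizer n A = Subalgebra.toSubmodule (Subalgebra.centralizer ℂ {A}) := by
    ext B
    simp [matCentralizer, Subalgebra.mem_centralizer_iff]
  rw [h, Subalgebra.finrank_toSubmodule]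
  simpa using A.card_le_finrank_centralizer

/-- For every n ≥ 1 and A ∈ M_n(ℂ), the centralizer of A has
ℂ-dimension at least n. -/
theorem centralizer_dim_ge (n : ℕ) (hn : 1 ≤ n) (A : Matrix (Fin n) (Fin n) ℂ) :
    n ≤ Module.finrank ℂ (matCentralizer n A) :=
  centralizer_dim_ge_general n A
end

section
/- Connectedness of regular centralizers in GL(n, ℂ): let A ∈ M_n(ℂ) be invertible and regular, i.e. the minimal polynomial of A equals its characteristic polynomial. Then the centralizer of A in GL(n, ℂ), namely the set {B ∈ M_n(ℂ) : B is invertible and AB = BA}, is a connected subset of M_n(ℂ) (with its standard topology as ℂ^{n²}). -/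
open Matrix Polynomial

/-- Connectedness of regular centralizers in GL(n,ℂ): if A is invertible
and regular (minpoly = charpoly), then the centralizer of A in GL(n,ℂ), viewed as the
subset {B : B invertible and AB = BA} of M_n(ℂ) ≅ ℂ^{n²}, is connected. -/
theorem regular_centralizer_connected (n : ℕ) (hn : 1 ≤ n)
    (A : Matrix (Fin n) (Fin n) ℂ)
    (hA : IsUnit A)
    (hreg : minpoly ℂ A = A.charpoly) :
    IsConnected {B : Matrix (Fin n) (Fin n) ℂ | IsUnit B ∧ A * B = B * A} := by
  constructor
  · exact ⟨A, hA, rfl⟩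
  · apply isPreconnected_of_forall_pair
    rintro B ⟨hBu, hBc⟩ C ⟨hCu, hCc⟩
    -- the affine path z ↦ (1-z)•B + z•C in the commutant
    set g : ℂ → Matrix (Fin n) (Fin n) ℂ := fun z => (1 - z) • B + z • C with hg
    have hgcont : Continuous g := by fun_prop
    -- polynomial whose evaluation at z is det (g z)
    set M : Matrix (Fin n) (Fin n) ℂ[X] :=
      (1 - X : ℂ[X]) • B.map Polynomial.C + (X : ℂ[X]) • C.map Polynomial.C with hM
    have hev : ∀ z : ℂ, (M.det).eval z = (g z).det := by
      intro z
      have h1 : M.map (Polynomial.eval z) = g z := by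
        ext i j
        show Polynomial.eval z (M i j) = _
        rw [hM]
        simp only [Matrix.add_apply, Matrix.smul_apply, Matrix.map_apply, smul_eq_mul,
          Polynomial.eval_add, Polynomial.eval_mul, Polynomial.eval_sub, Polynomial.eval_one,
          Polynomial.eval_X, Polynomial.eval_C, hg]
      rw [← h1]
      simpa [RingHom.mapMatrix_apply] using RingHom.map_det (Polynomial.evalRingHom z) M
    have hg0 : g 0 = B := by simp [hg]
    have hg1 : g 1 = C := by simp [hg]
    have hMne : M.det ≠ 0 := by
      intro h
      have h0 := hev 0
      rw [h, Polynomial.eval_zero, hg0] at h0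
      exact ((Matrix.isUnit_iff_isUnit_det B).mp hBu).ne_zero h0.symm
    -- the set of roots is finite, so its complement in ℂ is connected
    have hfin : Set.Finite {z : ℂ | (M.det).eval z = 0} :=
      Polynomial.finite_setOf_isRoot hMne
    have hconn : IsConnected ({z : ℂ | (M.det).eval z = 0}ᶜ) :=
      Set.Countable.isConnected_compl_of_one_lt_rank
        (by rw [Complex.rank_real_complex]; exact Cardinal.one_lt_two) hfin.countable
    refine ⟨g '' {z : ℂ | (M.det).eval z = 0}ᶜ, ?_, ?_, ?_, ?_⟩
    · rintro x ⟨z, hz, rfl⟩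
      refine ⟨(Matrix.isUnit_iff_isUnit_det _).mpr ?_, ?_⟩
      · rw [← hev z]; exact isUnit_iff_ne_zero.mpr hz
      · simp only [hg, Matrix.mul_add, Matrix.add_mul, Matrix.mul_smul, Matrix.smul_mul,
          hBc, hCc]
    · refine ⟨0, ?_, hg0⟩
      simp only [Set.mem_compl_iff, Set.mem_setOf_eq, hev 0, hg0]
      exact ((Matrix.isUnit_iff_isUnit_det B).mp hBu).ne_zero
    · refine ⟨1, ?_, hg1⟩
      simp only [Set.mem_compl_iff, Set.mem_setOf_eq, hev 1, hg1]
      exact ((Matrix.isUnit_iff_isUnit_det C).mp hCu).ne_zero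
    · exact (hconn.isPreconnected).image g hgcont.continuousOn
end
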